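/- For every natural number q and every divisor d of q, one has κ(d)·κ(q/d) ≤ k^{2ω(q)}·κ(q). -/

import Mathlib

/-!
Both sides factor over the prime powers exactly dividing `q`, so it suffices to show
`κ(p^a) κ(p^b) ≤ k² κ(p^(a+b))` for every prime `p`. Writing `n = u k + v` with `1 ≤ v ≤ k`,
`κ(p^n)` is `p^(-m/2)` up to a factor `1` or `k`, where `m = 2u + 1` if `v = 1` and `m = 2u + 2`
otherwise. For `k ≥ 2` this exponent `m` is subadditive in `n`, and the at most two factors `k`
on the left are absorbed by `k²`.
-/

open Finset

theorem Nat.apply_eq_prod_primeFactors_of_dvd {β : Type*} [CommMonoid β] {f : ℕ → β}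
    (hf1 : f 1 = 1) (hmul : ∀ m n : ℕ, m.Coprime n → f (m * n) = f m * f n)
    {n q : ℕ} (hq : q ≠ 0) (hn : n ∣ q) :
    f n = ∏ p ∈ q.primeFactors, f (p ^ n.factorization p) := by
  rw [Nat.multiplicative_factorization f hmul hf1 (ne_zero_of_dvd_ne_zero hq hn)]
  refine Finsupp.prod_of_support_subset _ ?_ _ fun _ _ ↦ by rw [pow_zero, hf1]
  exact Nat.support_factorization n ▸ Nat.primeFactors_mono hn hq

theorem Nat.apply_mul_apply_div_le {R : Type*} [CommSemiring R] [PartialOrder R] [IsOrderedRing R]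
    {f : ℕ → R} {C : R}
    (hf1 : f 1 = 1) (hmul : ∀ m n : ℕ, m.Coprime n → f (m * n) = f m * f n)
    (hnonneg : ∀ p : ℕ, p.Prime → ∀ e, 0 ≤ f (p ^ e))
    (hpow : ∀ p : ℕ, p.Prime → ∀ a b, f (p ^ a) * f (p ^ b) ≤ C * f (p ^ (a + b)))
    {q d : ℕ} (hq : q ≠ 0) (hd : d ∣ q) :
    f d * f (q / d) ≤ C ^ q.primeFactors.card * f q := by
  have hfactor := fun n (hn : n ∣ q) ↦ Nat.apply_eq_prod_primeFactors_of_dvd hf1 hmul hq hn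
  calc f d * f (q / d)
      = ∏ p ∈ q.primeFactors,
          f (p ^ d.factorization p) * f (p ^ (q.factorization p - d.factorization p)) := by
        rw [hfactor d hd, hfactor (q / d) (Nat.div_dvd_of_dvd hd), ← prod_mul_distrib,
          Nat.factorization_div hd]
        rfl
    _ ≤ ∏ p ∈ q.primeFactors, C * f (p ^ q.factorization p) := by
        refine prod_le_prod (fun p hp ↦ ?_) fun p hp ↦ ?_
        · have hp := Nat.prime_of_mem_primeFactors hp
          exact mul_nonneg (hnonneg p hp _) (hnonneg p hp _)
        · have hle := (Nat.factorization_le_iff_dvd (ne_zero_of_dvd_ne_zero hq hd) hq).2 hd p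
          simpa only [Nat.add_sub_cancel' hle] using
            hpow p (Nat.prime_of_mem_primeFactors hp) (d.factorization p)
              (q.factorization p - d.factorization p)
    _ = C ^ q.primeFactors.card * f q := by
        rw [prod_mul_distrib, prod_const, ← hfactor q dvd_rfl]

theorem Nat.exists_eq_mul_add_of_pos {k n : ℕ} (hk : 0 < k) (hn : 0 < n) :
    ∃ u v, 1 ≤ v ∧ v ≤ k ∧ n = u * k + v :=
  ⟨(n - 1) / k, (n - 1) % k + 1, by omega, Nat.mod_lt _ hk,
    by have := Nat.div_add_mod' (n - 1) k; omega⟩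

/-- `κ(p^(u k + v))` is `p^(-kappaDecay u v / 2)`, times `k` when `v = 1`. -/
def kappaDecay (u v : ℕ) : ℕ := 2 * u + if v = 1 then 1 else 2

theorem exists_mul_add_eq_add_kappaDecay_le {k u₁ v₁ u₂ v₂ : ℕ} (hk : 2 ≤ k)
    (hv₁ : 1 ≤ v₁) (hv₁k : v₁ ≤ k) (hv₂ : 1 ≤ v₂) (hv₂k : v₂ ≤ k) :
    ∃ u v, 1 ≤ v ∧ v ≤ k ∧ (u₁ * k + v₁) + (u₂ * k + v₂) = u * k + v ∧
      kappaDecay u v ≤ kappaDecay u₁ v₁ + kappaDecay u₂ v₂ := by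
  by_cases hcarry : v₁ + v₂ ≤ k
  · refine ⟨u₁ + u₂, v₁ + v₂, by omega, hcarry, by ring, ?_⟩
    unfold kappaDecay
    split_ifs <;> omega
  -- A carry forces `v₁ + v₂ > k ≥ 2`, so `v₁` and `v₂` are not both `1`.
  · refine ⟨u₁ + u₂ + 1, v₁ + v₂ - k, by omega, by omega, ?_, ?_⟩
    · rw [add_mul, add_mul, one_mul]
      omega
    · unfold kappaDecay
      split_ifs <;> omega

/-- `f e` plays the role of `κ(p^e)`, with the prime `p` replaced by a real number `x`. -/
structure IsKappaPowerSeq (k : ℕ) (x : ℝ) (f : ℕ → ℝ) : Prop where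
  zero : f 0 = 1
  mul_add_one : ∀ u : ℕ, f (u * k + 1) = k * x ^ (-(u : ℝ) - 1 / 2)
  mul_add : ∀ u v : ℕ, 2 ≤ v → v ≤ k → f (u * k + v) = x ^ (-(u : ℝ) - 1)

namespace IsKappaPowerSeq

variable {k : ℕ} {x : ℝ} {f : ℕ → ℝ} {u v : ℕ}

theorem eq_mul_rpow (hf : IsKappaPowerSeq k x f) (hv : 1 ≤ v) (hvk : v ≤ k) :
    f (u * k + v) = (k : ℝ) ^ (if v = 1 then 1 else 0) * x ^ (-(kappaDecay u v : ℝ) / 2) := by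
  unfold kappaDecay
  split_ifs with hv1
  · subst hv1
    rw [hf.mul_add_one]
    push_cast
    ring_nf
  · rw [hf.mul_add u v (by omega) hvk]
    push_cast
    ring_nf

theorem rpow_le_apply (hf : IsKappaPowerSeq k x f) (hk : 0 < k) (hx : 0 ≤ x)
    (hv : 1 ≤ v) (hvk : v ≤ k) : x ^ (-(kappaDecay u v : ℝ) / 2) ≤ f (u * k + v) := by
  rw [hf.eq_mul_rpow hv hvk]
  exact le_mul_of_one_le_left (by positivity) (one_le_pow₀ (by exact_mod_cast hk))

theorem apply_le_mul_rpow (hf : IsKappaPowerSeq k x f) (hk : 0 < k) (hx : 0 ≤ x)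
    (hv : 1 ≤ v) (hvk : v ≤ k) : f (u * k + v) ≤ k * x ^ (-(kappaDecay u v : ℝ) / 2) := by
  rw [hf.eq_mul_rpow hv hvk]
  gcongr
  calc (k : ℝ) ^ (if v = 1 then 1 else 0) ≤ (k : ℝ) ^ 1 :=
        pow_le_pow_right₀ (by exact_mod_cast hk) (by split_ifs <;> norm_num)
    _ = k := pow_one _

theorem nonneg (hf : IsKappaPowerSeq k x f) (hk : 0 < k) (hx : 0 ≤ x) (n : ℕ) : 0 ≤ f n := by
  rcases n.eq_zero_or_pos with rfl | hn
  · rw [hf.zero]; exact zero_le_one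
  obtain ⟨u, v, hv, hvk, rfl⟩ := Nat.exists_eq_mul_add_of_pos hk hn
  rw [hf.eq_mul_rpow hv hvk]
  positivity

theorem mul_le (hf : IsKappaPowerSeq k x f) (hk : 2 ≤ k) (hx : 1 ≤ x) (a b : ℕ) :
    f a * f b ≤ k ^ 2 * f (a + b) := by
  have hk0 : 0 < k := by omega
  have hx0 : 0 < x := zero_lt_one.trans_le hx
  have hk2 : (1 : ℝ) ≤ k ^ 2 := one_le_pow₀ (by exact_mod_cast hk0)
  rcases a.eq_zero_or_pos with rfl | ha
  · rw [hf.zero, one_mul, zero_add]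
    exact le_mul_of_one_le_left (hf.nonneg hk0 hx0.le b) hk2
  rcases b.eq_zero_or_pos with rfl | hb
  · rw [hf.zero, mul_one, add_zero]
    exact le_mul_of_one_le_left (hf.nonneg hk0 hx0.le a) hk2
  obtain ⟨u₁, v₁, hv₁, hv₁k, rfl⟩ := Nat.exists_eq_mul_add_of_pos hk0 ha
  obtain ⟨u₂, v₂, hv₂, hv₂k, rfl⟩ := Nat.exists_eq_mul_add_of_pos hk0 hb
  obtain ⟨u, v, hv, hvk, hsum, hdecay⟩ :=
    exists_mul_add_eq_add_kappaDecay_le hk hv₁ hv₁k hv₂ hv₂k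
  calc f (u₁ * k + v₁) * f (u₂ * k + v₂)
      ≤ (k * x ^ (-(kappaDecay u₁ v₁ : ℝ) / 2)) * (k * x ^ (-(kappaDecay u₂ v₂ : ℝ) / 2)) :=
        mul_le_mul (hf.apply_le_mul_rpow hk0 hx0.le hv₁ hv₁k)
          (hf.apply_le_mul_rpow hk0 hx0.le hv₂ hv₂k)
          (hf.nonneg hk0 hx0.le _) (by positivity)
    _ = k ^ 2 * x ^ (-((kappaDecay u₁ v₁ + kappaDecay u₂ v₂ : ℕ) : ℝ) / 2) := by
        rw [mul_mul_mul_comm, ← Real.rpow_add hx0]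
        push_cast
        ring_nf
    _ ≤ k ^ 2 * x ^ (-(kappaDecay u v : ℝ) / 2) := by gcongr
    _ ≤ k ^ 2 * f (u₁ * k + v₁ + (u₂ * k + v₂)) := by
        rw [hsum]
        gcongr
        exact hf.rpow_le_apply hk0 hx0.le hv hvk

end IsKappaPowerSeq

/-- For every natural number `q` and every divisor `d` of `q`, one has
`κ(d)·κ(q/d) ≤ k^{2ω(q)}·κ(q)`, where `ω(q)` is the number of distinct prime
divisors of `q`. -/
theorem stmt3 (k : ℕ) (hk : 2 ≤ k) (κ : ℕ → ℝ)
    (hκ1 : κ 1 = 1)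
    (hκmul : ∀ m n : ℕ, Nat.Coprime m n → κ (m * n) = κ m * κ n)
    (hκA : ∀ p : ℕ, p.Prime → ∀ u : ℕ,
      κ (p ^ (u * k + 1)) = (k : ℝ) * (p : ℝ) ^ (-(u : ℝ) - 1/2))
    (hκB : ∀ p : ℕ, p.Prime → ∀ u v : ℕ, 2 ≤ v → v ≤ k →
      κ (p ^ (u * k + v)) = (p : ℝ) ^ (-(u : ℝ) - 1))
    (q d : ℕ) (hq : 0 < q) (hd : d ∣ q) :
    κ d * κ (q / d) ≤ (k : ℝ) ^ (2 * q.primeFactors.card) * κ q := by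
  have hlocal : ∀ p : ℕ, p.Prime → IsKappaPowerSeq k p fun e ↦ κ (p ^ e) :=
    fun p hp ↦ ⟨by rw [pow_zero, hκ1], hκA p hp, hκB p hp⟩
  rw [pow_mul]
  exact Nat.apply_mul_apply_div_le hκ1 hκmul
    (fun p hp ↦ (hlocal p hp).nonneg (by omega) p.cast_nonneg)
    (fun p hp ↦ (hlocal p hp).mul_le hk (by exact_mod_cast hp.one_lt.le)) hq.ne' hd
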